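/- Let 0 < q, p < ∞ and set 1/r := |1/q − 1/p| (with r = ∞ when q = p). For every v ∈ ℂ^{D₁×D₂}, define ‖v‖_{ℓ_q[ℓ_p]} := (∑_{i=1}^{D₁} (∑_{j=1}^{D₂} |v_{ij}|^p)^{q/p})^{1/q}. Then: (i) if q ≤ p, ‖v‖_{ℓ_q[ℓ_p]} equals the infimum, over vectors a, b ∈ [0,∞)^{D₁} such that a_i > 0 and b_i > 0 for every index i whose row v_{i·} is nonzero, of ‖a‖_{ℓ_{2r}} · ‖b‖_{ℓ_{2r}} · ‖w‖_{ℓ_p}, where w ∈ ℂ^{D₁×D₂} has entries w_{ij} := v_{ij}/(a_i b_i) when v_{ij} ≠ 0 and w_{ij} := 0 otherwise; (ii) if q ≥ p, ‖v‖_{ℓ_q[ℓ_p]} equals the supremum, over nonzero vectors a, b ∈ ℂ^{D₁}, of ‖a‖_{ℓ_{2r}}^{-1} · ‖b‖_{ℓ_{2r}}^{-1} · ‖u‖_{ℓ_p}, where u ∈ ℂ^{D₁×D₂} has entries u_{ij} := a_i v_{ij} b_i. -/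

import Mathlib

open scoped ENNReal ComplexOrder
open Matrix Kronecker

noncomputable section

/-- Singular values of a complex square matrix: the square roots of the eigenvalues of `Xᴴ * X`. -/
def singularValues {ι : Type*} [Fintype ι] [DecidableEq ι] (X : Matrix ι ι ℂ) : ι → ℝ :=
  fun i => Real.sqrt ((Matrix.isHermitian_conjTranspose_mul_self X).eigenvalues i)

/-- Schatten `p` quasi-norm for `p ∈ (0,∞]`; for `p = ∞` the operator norm (largest singular
value). -/
def schattenNorm {ι : Type*} [Fintype ι] [DecidableEq ι] (p : ℝ≥0∞) (X : Matrix ι ι ℂ) : ℝ :=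
  if p = ∞ then ⨆ i, singularValues X i
  else (∑ i, singularValues X i ^ p.toReal) ^ (1 / p.toReal)

/-- `|1/q - 1/p|` computed in `ℝ≥0∞`. -/
def recipGap (q p : ℝ≥0∞) : ℝ≥0∞ := max (1 / q - 1 / p) (1 / p - 1 / q)

/-- The 2-indexed Schatten quasi-norm `‖·‖_{(q,p)}` on matrices over a product index type. -/
def schatten2 {ι₁ ι₂ : Type*} [Fintype ι₁] [DecidableEq ι₁] [Fintype ι₂] [DecidableEq ι₂]
    (q p : ℝ≥0∞) (X : Matrix (ι₁ × ι₂) (ι₁ × ι₂) ℂ) : ℝ :=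
  if q ≤ p then
    sInf { c | ∃ (a b : Matrix ι₁ ι₁ ℂ) (Z : Matrix (ι₁ × ι₂) (ι₁ × ι₂) ℂ),
      X = (a ⊗ₖ (1 : Matrix ι₂ ι₂ ℂ)) * Z * (b ⊗ₖ (1 : Matrix ι₂ ι₂ ℂ)) ∧
      c = schattenNorm (2 * (recipGap q p)⁻¹) a * schattenNorm (2 * (recipGap q p)⁻¹) b *
            schattenNorm p Z }
  else
    sSup { c | ∃ (a b : Matrix ι₁ ι₁ ℂ), a ≠ 0 ∧ b ≠ 0 ∧
      c = (schattenNorm (2 * (recipGap q p)⁻¹) a)⁻¹ * (schattenNorm (2 * (recipGap q p)⁻¹) b)⁻¹ *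
            schattenNorm p ((a ⊗ₖ (1 : Matrix ι₂ ι₂ ℂ)) * X * (b ⊗ₖ (1 : Matrix ι₂ ι₂ ℂ))) }

/-- Apply a real function to a Hermitian matrix through its spectral decomposition
(junk value `0` on non-Hermitian matrices). -/
def specFun {ι : Type*} [Fintype ι] [DecidableEq ι] (f : ℝ → ℝ) (A : Matrix ι ι ℂ) :
    Matrix ι ι ℂ :=
  if h : A.IsHermitian then
    (h.eigenvectorUnitary : Matrix ι ι ℂ) *
      Matrix.diagonal (fun i => (f (h.eigenvalues i) : ℂ)) *
      star (h.eigenvectorUnitary : Matrix ι ι ℂ)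
  else 0

/-- Moore–Penrose pseudo-inverse of a Hermitian (in particular positive semidefinite) matrix. -/
def mpinv {ι : Type*} [Fintype ι] [DecidableEq ι] (A : Matrix ι ι ℂ) : Matrix ι ι ℂ :=
  specFun (fun x => if x = 0 then 0 else x⁻¹) A

/-- Orthogonal projection onto the range of a Hermitian (e.g. PSD) matrix. -/
def rangeProj {ι : Type*} [Fintype ι] [DecidableEq ι] (A : Matrix ι ι ℂ) : Matrix ι ι ℂ :=
  specFun (fun x => if x = 0 then 0 else 1) A

/-- Real power of a positive semidefinite matrix, applied via the spectral decomposition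
(`0 ^ t = 0` for `t ≠ 0`). -/
def rpowMat {ι : Type*} [Fintype ι] [DecidableEq ι] (A : Matrix ι ι ℂ) (t : ℝ) : Matrix ι ι ℂ :=
  specFun (fun x => x ^ t) A

/-- Entrywise `ℓ_s` norm of a finite complex vector, `s ∈ (0,∞]`. -/
def lNorm {ι : Type*} [Fintype ι] (s : ℝ≥0∞) (v : ι → ℂ) : ℝ :=
  if s = ∞ then ⨆ i, ‖v i‖
  else (∑ i, ‖v i‖ ^ s.toReal) ^ (1 / s.toReal)

/-- The tensor product `Φ ⊗ Ψ` of two (linear) maps between matrix spaces, given entrywise by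
its action on matrix units. -/
def mapTensorFun {m k m' k' : Type*} [Fintype m] [DecidableEq m] [Fintype k] [DecidableEq k]
    (Φ : Matrix m m ℂ → Matrix m' m' ℂ) (Ψ : Matrix k k ℂ → Matrix k' k' ℂ) :
    Matrix (m × k) (m × k) ℂ → Matrix (m' × k') (m' × k') ℂ :=
  fun X => Matrix.of fun pp qq => ∑ i, ∑ i', ∑ j, ∑ j',
    X (i, j) (i', j') * Φ (Matrix.single i i' 1) pp.1 qq.1 *
      Ψ (Matrix.single j j' 1) pp.2 qq.2

/-- Complete positivity of a linear map between matrix algebras. -/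
def IsCompletelyPositive {m m' : Type*} [Fintype m] [DecidableEq m] [Fintype m'] [DecidableEq m']
    (Φ : Matrix m m ℂ →ₗ[ℂ] Matrix m' m' ℂ) : Prop :=
  ∀ (n : ℕ) (X : Matrix (Fin n × m) (Fin n × m) ℂ), X.PosSemidef →
    (mapTensorFun (id : Matrix (Fin n) (Fin n) ℂ → Matrix (Fin n) (Fin n) ℂ) (⇑Φ) X).PosSemidef

/-- Partial trace over the second tensor factor. -/
def ptrace2 {ι₁ ι₂ : Type*} [Fintype ι₂] (X : Matrix (ι₁ × ι₂) (ι₁ × ι₂) ℂ) : Matrix ι₁ ι₁ ℂ :=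
  Matrix.of fun i i' => ∑ j, X (i, j) (i', j)

end

/-!
With `R i = ‖v i‖_p` the row norms, `‖v‖_{ℓ_q[ℓ_p]} = ‖R‖_q`, and scaling row `i` by `c i`
scales `R i` by `‖c i‖`. Writing `v = a b w` row-wise (case `q ≤ p`), resp. `u = a b v`
(case `p ≤ q`), both bounds are the three-factor Hölder inequality
`‖a b h‖_r ≤ ‖a‖_s ‖b‖_s ‖h‖_t` for `r⁻¹ = s⁻¹ + s⁻¹ + t⁻¹`, here taken from the Hölder
inequality for `eLpNorm` with respect to the counting measure. Equality holds for
`a = b = R ^ (q / s)`; when `q = p` we have `s = ∞`, the exponent is `0`, and the weights are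
constant.
-/

open MeasureTheory

theorem rpow_mul_rpow_mul_rpow {x : ℝ} (hx : 0 ≤ x) {a b c : ℝ} (h : a + b + c ≠ 0) :
    x ^ a * x ^ b * x ^ c = x ^ (a + b + c) := by
  rcases hx.eq_or_lt with rfl | hx
  · rw [Real.zero_rpow h]
    by_cases hc : c = 0
    · by_cases ha : a = 0
      · simp [ha, hc, Real.zero_rpow (by simpa [ha, hc] using h : b ≠ 0)]
      · simp [Real.zero_rpow ha]
    · simp [Real.zero_rpow hc]
  · rw [Real.rpow_add hx, Real.rpow_add hx]

theorem toReal_inv_eq_add_add {r a b c : ℝ≥0∞} (hr : r ≠ 0) (h : r⁻¹ = a⁻¹ + b⁻¹ + c⁻¹) :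
    r⁻¹.toReal = a⁻¹.toReal + b⁻¹.toReal + c⁻¹.toReal := by
  have hfin : a⁻¹ + b⁻¹ + c⁻¹ ≠ ∞ := h ▸ ENNReal.inv_ne_top.mpr hr
  obtain ⟨hab, hc⟩ := ENNReal.add_ne_top.mp hfin
  obtain ⟨ha, hb⟩ := ENNReal.add_ne_top.mp hab
  rw [h, ENNReal.toReal_add hab hc, ENNReal.toReal_add ha hb]

theorem toReal_mul_toReal_inv {q : ℝ≥0∞} (hq0 : q ≠ 0) (hq : q ≠ ∞) :
    q.toReal * q⁻¹.toReal = 1 := by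
  rw [ENNReal.toReal_inv, mul_inv_cancel₀ (ENNReal.toReal_ne_zero.mpr ⟨hq0, hq⟩)]

section lNorm

variable {ι : Type*} [Fintype ι]

theorem lNorm_nonneg (s : ℝ≥0∞) (v : ι → ℂ) : 0 ≤ lNorm s v := by
  unfold lNorm
  split_ifs
  · exact Real.iSup_nonneg fun i => norm_nonneg _
  · exact Real.rpow_nonneg (Finset.sum_nonneg fun i _ => Real.rpow_nonneg (norm_nonneg _) _) _

theorem lNorm_congr_norm {s : ℝ≥0∞} {f g : ι → ℂ} (h : ∀ i, ‖f i‖ = ‖g i‖) :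
    lNorm s f = lNorm s g := by
  simp only [lNorm, h]

theorem lNorm_eq_toReal_eLpNorm [MeasurableSpace ι] [MeasurableSingletonClass ι] {s : ℝ≥0∞}
    (hs : s ≠ 0) (v : ι → ℂ) : lNorm s v = (eLpNorm v s .count).toReal := by
  by_cases hs' : s = ∞
  · subst hs'
    rw [lNorm, if_pos rfl, eLpNorm_exponent_top, eLpNormEssSup_count,
      ENNReal.toReal_iSup fun i => enorm_ne_top]
    simp
  · rw [lNorm, if_neg hs', eLpNorm_eq_eLpNorm' hs hs', eLpNorm', lintegral_count, tsum_fintype,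
      ← ENNReal.toReal_rpow, ENNReal.toReal_sum fun i _ => by finiteness]
    simp [← ENNReal.toReal_rpow]

theorem lNorm_zero {s : ℝ≥0∞} (hs : s ≠ 0) : lNorm s (fun _ : ι => (0 : ℂ)) = 0 := by
  let _ : MeasurableSpace ι := ⊤
  simp [lNorm_eq_toReal_eLpNorm hs]

theorem norm_le_lNorm {s : ℝ≥0∞} (hs : s ≠ 0) (v : ι → ℂ) (i : ι) : ‖v i‖ ≤ lNorm s v := by
  let _ : MeasurableSpace ι := ⊤
  rw [lNorm_eq_toReal_eLpNorm hs, ← toReal_enorm]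
  exact ENNReal.toReal_mono (eLpNorm_count_lt_top_of_lt fun _ => enorm_lt_top).ne
    (enorm_le_eLpNorm_count v i hs)

theorem lNorm_smul {s : ℝ≥0∞} (hs : s ≠ 0) (c : ℂ) (v : ι → ℂ) :
    lNorm s (c • v) = ‖c‖ * lNorm s v := by
  let _ : MeasurableSpace ι := ⊤
  simp [lNorm_eq_toReal_eLpNorm hs, eLpNorm_const_smul]

theorem lNorm_mul_le {p q r : ℝ≥0∞} [hpqr : ENNReal.HolderTriple p q r] (hp : p ≠ 0) (hq : q ≠ 0)
    (f g : ι → ℂ) : lNorm r (f * g) ≤ lNorm p f * lNorm q g := by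
  let _ : MeasurableSpace ι := ⊤
  have hr : r ≠ 0 := by
    rw [← ENNReal.inv_ne_top, ← hpqr.inv_add_inv_eq_inv]
    simp [hp, hq]
  rw [lNorm_eq_toReal_eLpNorm hr, lNorm_eq_toReal_eLpNorm hp, lNorm_eq_toReal_eLpNorm hq,
    ← ENNReal.toReal_mul]
  exact ENNReal.toReal_mono
    (ENNReal.mul_ne_top (eLpNorm_count_lt_top_of_lt fun _ => enorm_lt_top).ne
      (eLpNorm_count_lt_top_of_lt fun _ => enorm_lt_top).ne)
    (eLpNorm_smul_le_mul_eLpNorm (φ := f) (f := g) Measurable.of_discrete.aestronglyMeasurable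
      Measurable.of_discrete.aestronglyMeasurable)

theorem lNorm_pos {s : ℝ≥0∞} (hs : s ≠ 0) {v : ι → ℂ} (hv : v ≠ 0) :
    0 < lNorm s v := by
  obtain ⟨i, hi⟩ := Function.ne_iff.mp hv
  exact (norm_pos_iff.mpr hi).trans_le (norm_le_lNorm hs v i)

theorem lNorm_mul_mul_le {p₁ p₂ p₃ r : ℝ≥0∞} (hr : r⁻¹ = p₁⁻¹ + p₂⁻¹ + p₃⁻¹) (h₁ : p₁ ≠ 0)
    (h₂ : p₂ ≠ 0) (h₃ : p₃ ≠ 0) (f g h : ι → ℂ) :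
    lNorm r (f * g * h) ≤ lNorm p₁ f * lNorm p₂ g * lNorm p₃ h := by
  have : ENNReal.HolderTriple p₁ p₂ (p₁⁻¹ + p₂⁻¹)⁻¹ := ⟨by rw [inv_inv]⟩
  have : ENNReal.HolderTriple (p₁⁻¹ + p₂⁻¹)⁻¹ p₃ r := ⟨by rw [inv_inv, hr]⟩
  calc lNorm r (f * g * h) ≤ lNorm (p₁⁻¹ + p₂⁻¹)⁻¹ (f * g) * lNorm p₃ h :=
        lNorm_mul_le (by simp [h₁, h₂]) h₃ _ _
    _ ≤ _ := mul_le_mul_of_nonneg_right (lNorm_mul_le h₁ h₂ f g) (lNorm_nonneg _ _)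

theorem lNorm_rpow [Nonempty ι] {s t : ℝ≥0∞} (hs : s ≠ 0) (ht0 : t ≠ 0) (ht : t ≠ ∞) {x : ι → ℝ}
    (hx : ∀ i, 0 ≤ x i) :
    lNorm s (fun i => ((x i ^ (t.toReal * s⁻¹.toReal) : ℝ) : ℂ)) =
      lNorm t (fun i => (x i : ℂ)) ^ (t.toReal * s⁻¹.toReal) := by
  by_cases hs' : s = ∞
  · simp [hs', lNorm]
  have ht' : t.toReal ≠ 0 := ENNReal.toReal_ne_zero.mpr ⟨ht0, ht⟩
  have hs'' : s.toReal ≠ 0 := ENNReal.toReal_ne_zero.mpr ⟨hs, hs'⟩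
  have hsum : 0 ≤ ∑ i, x i ^ t.toReal := Finset.sum_nonneg fun i _ => Real.rpow_nonneg (hx i) _
  simp only [lNorm, if_neg hs', if_neg ht, Complex.norm_of_nonneg (hx _),
    Complex.norm_of_nonneg (Real.rpow_nonneg (hx _) _), ← Real.rpow_mul (hx _),
    ← Real.rpow_mul hsum, ENNReal.toReal_inv]
  congr 1
  · exact Finset.sum_congr rfl fun i _ => by field_simp
  · field_simp

end lNorm

section lqlpNorm

variable {m n : Type*} [Fintype m] [Fintype n]

noncomputable def lqlpNorm (q p : ℝ≥0∞) (v : Matrix m n ℂ) : ℝ :=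
  lNorm q fun i => (lNorm p (v i) : ℂ)

theorem lqlpNorm_nonneg (q p : ℝ≥0∞) (v : Matrix m n ℂ) : 0 ≤ lqlpNorm q p v :=
  lNorm_nonneg _ _

theorem lqlpNorm_eq_sum {q p : ℝ≥0∞} (hq : q ≠ ∞) (hp0 : p ≠ 0) (hp : p ≠ ∞)
    (v : Matrix m n ℂ) :
    lqlpNorm q p v =
      (∑ i, (∑ j, ‖v i j‖ ^ p.toReal) ^ (q.toReal / p.toReal)) ^ (1 / q.toReal) := by
  have hp' : p.toReal ≠ 0 := ENNReal.toReal_ne_zero.mpr ⟨hp0, hp⟩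
  simp only [lqlpNorm, lNorm, if_neg hq, if_neg hp]
  congr 1
  refine Finset.sum_congr rfl fun i _ => ?_
  have hrow : 0 ≤ ∑ j, ‖v i j‖ ^ p.toReal :=
    Finset.sum_nonneg fun j _ => Real.rpow_nonneg (norm_nonneg _) _
  rw [Complex.norm_of_nonneg (Real.rpow_nonneg hrow _), ← Real.rpow_mul hrow, one_div_mul_eq_div]

theorem lNorm_uncurry {p : ℝ≥0∞} (hp0 : p ≠ 0) (hp : p ≠ ∞) (v : Matrix m n ℂ) :
    lNorm p (fun ij : m × n => v ij.1 ij.2) = lqlpNorm p p v := by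
  have hp' : p.toReal ≠ 0 := ENNReal.toReal_ne_zero.mpr ⟨hp0, hp⟩
  simp only [lqlpNorm, lNorm, if_neg hp, Fintype.sum_prod_type]
  congr 1
  refine Finset.sum_congr rfl fun i _ => ?_
  have hrow : 0 ≤ ∑ j, ‖v i j‖ ^ p.toReal :=
    Finset.sum_nonneg fun j _ => Real.rpow_nonneg (norm_nonneg _) _
  rw [Complex.norm_of_nonneg (Real.rpow_nonneg hrow _), one_div, Real.rpow_inv_rpow hrow hp']

theorem lqlpNorm_rowwise_mul {r p : ℝ≥0∞} (hp : p ≠ 0) (c : m → ℂ) (v : Matrix m n ℂ) :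
    lqlpNorm r p (fun i j => c i * v i j) =
      lNorm r fun i => ((‖c i‖ * lNorm p (v i) : ℝ) : ℂ) := by
  simp only [lqlpNorm]
  congr 1
  funext i
  rw [show (fun j => c i * v i j) = c i • v i from rfl, lNorm_smul hp]

theorem lqlpNorm_mul_mul_le {r s₁ s₂ t p : ℝ≥0∞} (hr : r⁻¹ = s₁⁻¹ + s₂⁻¹ + t⁻¹) (h₁ : s₁ ≠ 0)
    (h₂ : s₂ ≠ 0) (ht : t ≠ 0) (hp : p ≠ 0) (a b : m → ℂ) (v : Matrix m n ℂ) :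
    lqlpNorm r p (fun i j => a i * b i * v i j) ≤ lNorm s₁ a * lNorm s₂ b * lqlpNorm t p v := by
  rw [lqlpNorm_rowwise_mul hp]
  calc _ = lNorm r (a * b * fun i => (lNorm p (v i) : ℂ)) :=
        lNorm_congr_norm fun i => by simp [abs_of_nonneg (lNorm_nonneg _ _)]
    _ ≤ _ := lNorm_mul_mul_le hr h₁ h₂ ht _ _ _

theorem norm_le_lqlpNorm {q p : ℝ≥0∞} (hq : q ≠ 0) (hp : p ≠ 0) (v : Matrix m n ℂ) (i : m)
    (j : n) : ‖v i j‖ ≤ lqlpNorm q p v :=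
  (norm_le_lNorm hp (v i) j).trans <| by
    simpa [lqlpNorm, abs_of_nonneg (lNorm_nonneg _ _)] using
      norm_le_lNorm hq (fun i => (lNorm p (v i) : ℂ)) i

theorem exists_lNorm_row_ne_zero {q p : ℝ≥0∞} (hq : q ≠ 0) {v : Matrix m n ℂ}
    (h : lqlpNorm q p v ≠ 0) : ∃ i, lNorm p (v i) ≠ 0 := by
  by_contra! hrows
  exact h (by simp only [lqlpNorm, hrows, Complex.ofReal_zero]; exact lNorm_zero hq)

theorem lNorm_rowNorms_rpow [Nonempty m] {q p s : ℝ≥0∞} (hs : s ≠ 0) (hq0 : q ≠ 0) (hq : q ≠ ∞)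
    (v : Matrix m n ℂ) :
    lNorm s (fun i => ((lNorm p (v i) ^ (q.toReal * s⁻¹.toReal) : ℝ) : ℂ)) =
      lqlpNorm q p v ^ (q.toReal * s⁻¹.toReal) :=
  lNorm_rpow hs hq0 hq fun _ => lNorm_nonneg _ _

theorem lNorm_uncurry_rowwise_mul_eq_rpow [Nonempty m] {q p : ℝ≥0∞} (hq0 : q ≠ 0) (hq : q ≠ ∞)
    (hp0 : p ≠ 0) (hp : p ≠ ∞) {v : Matrix m n ℂ} {κ : ℝ}
    (hκ : κ + κ + 1 = q.toReal * p⁻¹.toReal) {c : m → ℂ}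
    (hc : ∀ i, ‖c i‖ = lNorm p (v i) ^ κ * lNorm p (v i) ^ κ) :
    lNorm p (fun ij : m × n => c ij.1 * v ij.1 ij.2) =
      lqlpNorm q p v ^ (q.toReal * p⁻¹.toReal) := by
  have hβ : q.toReal * p⁻¹.toReal ≠ 0 := mul_ne_zero (ENNReal.toReal_ne_zero.mpr ⟨hq0, hq⟩)
    (ENNReal.toReal_ne_zero.mpr (by simp [hp0, hp]))
  rw [lNorm_uncurry hp0 hp (fun i j => c i * v i j), lqlpNorm_rowwise_mul hp0,
    ← lNorm_rowNorms_rpow hp0 hq0 hq]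
  refine lNorm_congr_norm fun i => ?_
  rw [hc, ← hκ, ← rpow_mul_rpow_mul_rpow (lNorm_nonneg _ _) (hκ ▸ hβ), Real.rpow_one]

theorem lqlpNorm_le_lNorm_mul_lNorm_mul_lNorm_inv_mul {q p s : ℝ≥0∞} (hs : s ≠ 0) (hp0 : p ≠ 0)
    (hp : p ≠ ∞) (hqsp : q⁻¹ = s⁻¹ + s⁻¹ + p⁻¹) {v : Matrix m n ℂ} {a b : m → ℂ}
    (hab : ∀ i j, v i j ≠ 0 → a i * b i ≠ 0) :
    lqlpNorm q p v ≤
      lNorm s a * lNorm s b * lNorm p (fun ij : m × n => (a ij.1 * b ij.1)⁻¹ * v ij.1 ij.2) := by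
  have hv : v = fun i j => a i * b i * ((a i * b i)⁻¹ * v i j) := by
    funext i j
    by_cases hij : v i j = 0
    · simp [hij]
    · rw [mul_inv_cancel_left₀ (hab i j hij)]
  rw [lNorm_uncurry hp0 hp (fun i j => (a i * b i)⁻¹ * v i j)]
  conv_lhs => rw [hv]
  exact lqlpNorm_mul_mul_le hqsp hs hs hp0 hp0 _ _ _

theorem lqlpNorm_eq_sInf {q p s : ℝ≥0∞} (hq0 : q ≠ 0) (hq : q ≠ ∞) (hp0 : p ≠ 0) (hp : p ≠ ∞)
    (hqsp : q⁻¹ = s⁻¹ + s⁻¹ + p⁻¹) (v : Matrix m n ℂ) :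
    lqlpNorm q p v = sInf {c | ∃ a b : m → ℝ, (∀ i, 0 ≤ a i) ∧ (∀ i, 0 ≤ b i) ∧
      (∀ i, (∃ j, v i j ≠ 0) → 0 < a i ∧ 0 < b i) ∧
      c = lNorm s (fun i => (a i : ℂ)) * lNorm s (fun i => (b i : ℂ)) *
        lNorm p (fun ij : m × n => ((a ij.1 : ℂ) * b ij.1)⁻¹ * v ij.1 ij.2)} := by
  have hs : s ≠ 0 := by
    rintro rfl
    simp [hq0] at hqsp
  refine (IsLeast.csInf_eq ⟨?_, ?_⟩).symm
  · rcases (lqlpNorm_nonneg q p v).eq_or_lt with hN | hN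
    · refine ⟨0, 0, fun _ => le_rfl, fun _ => le_rfl, fun i ⟨j, hj⟩ => ?_, ?_⟩
      · exact absurd (hN ▸ norm_le_lqlpNorm hq0 hp0 v i j) (not_le.mpr (norm_pos_iff.mpr hj))
      · simp [← hN, lNorm_zero hs]
    obtain ⟨i₀, hi₀⟩ := exists_lNorm_row_ne_zero hq0 hN.ne'
    have : Nonempty m := ⟨i₀⟩
    set γ := q.toReal * s⁻¹.toReal
    have hexp : γ + γ + q.toReal * p⁻¹.toReal = 1 := by
      linear_combination toReal_mul_toReal_inv hq0 hq - q.toReal * toReal_inv_eq_add_add hq0 hqsp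
    have hR : ∀ i, 0 ≤ lNorm p (v i) := fun i => lNorm_nonneg _ _
    refine ⟨fun i => lNorm p (v i) ^ γ, fun i => lNorm p (v i) ^ γ,
      fun i => Real.rpow_nonneg (hR i) _, fun i => Real.rpow_nonneg (hR i) _, ?_, ?_⟩
    · rintro i ⟨j, hj⟩
      have hRi := (norm_pos_iff.mpr hj).trans_le (norm_le_lNorm hp0 (v i) j)
      exact ⟨Real.rpow_pos_of_pos hRi _, Real.rpow_pos_of_pos hRi _⟩
    have hw := lNorm_uncurry_rowwise_mul_eq_rpow hq0 hq hp0 hp (v := v) (κ := -γ) (by linarith)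
      (c := fun i => ((lNorm p (v i) ^ γ : ℝ) * (lNorm p (v i) ^ γ : ℝ) : ℂ)⁻¹) fun i => by
        rw [← Complex.ofReal_mul, ← Complex.ofReal_inv, Complex.norm_of_nonneg
          (inv_nonneg.mpr (mul_nonneg (Real.rpow_nonneg (hR i) _) (Real.rpow_nonneg (hR i) _))),
          mul_inv, Real.rpow_neg (hR i)]
    beta_reduce at hw ⊢
    rw [lNorm_rowNorms_rpow hs hq0 hq, hw, rpow_mul_rpow_mul_rpow hN.le (by rw [hexp]; norm_num),
      hexp, Real.rpow_one]
  · rintro c ⟨a, b, -, -, hab, rfl⟩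
    refine lqlpNorm_le_lNorm_mul_lNorm_mul_lNorm_inv_mul hs hp0 hp hqsp fun i j hij => ?_
    obtain ⟨hai, hbi⟩ := hab i ⟨j, hij⟩
    exact_mod_cast (mul_pos hai hbi).ne'

theorem inv_lNorm_mul_inv_lNorm_mul_lNorm_le_lqlpNorm {q p s : ℝ≥0∞} (hs : s ≠ 0) (hq0 : q ≠ 0)
    (hp0 : p ≠ 0) (hp : p ≠ ∞) (hpsq : p⁻¹ = s⁻¹ + s⁻¹ + q⁻¹) (v : Matrix m n ℂ) {a b : m → ℂ}
    (ha : a ≠ 0) (hb : b ≠ 0) :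
    (lNorm s a)⁻¹ * (lNorm s b)⁻¹ * lNorm p (fun ij : m × n => a ij.1 * v ij.1 ij.2 * b ij.1) ≤
      lqlpNorm q p v := by
  have hA := lNorm_pos hs ha
  have hB := lNorm_pos hs hb
  have hu : lNorm p (fun ij : m × n => a ij.1 * v ij.1 ij.2 * b ij.1) ≤
      lNorm s a * lNorm s b * lqlpNorm q p v := by
    rw [lNorm_uncurry hp0 hp (fun i j => a i * v i j * b i)]
    simp only [mul_right_comm (a _) (v _ _) (b _)]
    exact lqlpNorm_mul_mul_le hpsq hs hs hq0 hp0 a b v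
  calc _ ≤ (lNorm s a)⁻¹ * (lNorm s b)⁻¹ * (lNorm s a * lNorm s b * lqlpNorm q p v) := by
        gcongr
    _ = lqlpNorm q p v := by field_simp

theorem lqlpNorm_eq_sSup {q p s : ℝ≥0∞} (hq0 : q ≠ 0) (hq : q ≠ ∞) (hp0 : p ≠ 0) (hp : p ≠ ∞)
    (hpsq : p⁻¹ = s⁻¹ + s⁻¹ + q⁻¹) (v : Matrix m n ℂ) :
    lqlpNorm q p v = sSup {c | ∃ a b : m → ℂ, a ≠ 0 ∧ b ≠ 0 ∧
      c = (lNorm s a)⁻¹ * (lNorm s b)⁻¹ *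
        lNorm p (fun ij : m × n => a ij.1 * v ij.1 ij.2 * b ij.1)} := by
  have hs : s ≠ 0 := by
    rintro rfl
    simp [hp0] at hpsq
  set S := {c | ∃ a b : m → ℂ, a ≠ 0 ∧ b ≠ 0 ∧
      c = (lNorm s a)⁻¹ * (lNorm s b)⁻¹ *
        lNorm p (fun ij : m × n => a ij.1 * v ij.1 ij.2 * b ij.1)}
  have hle : ∀ c ∈ S, c ≤ lqlpNorm q p v := by
    rintro c ⟨a, b, ha, hb, rfl⟩
    exact inv_lNorm_mul_inv_lNorm_mul_lNorm_le_lqlpNorm hs hq0 hp0 hp hpsq v ha hb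
  rcases (lqlpNorm_nonneg q p v).eq_or_lt with hN | hN
  -- `S` is empty when `m` is, so `sSup S = 0` is shown without a maximiser.
  · rw [← hN]
    refine le_antisymm (Real.sSup_nonneg ?_) (Real.sSup_nonpos fun c hc => (hle c hc).trans hN.ge)
    rintro c ⟨a, b, -, -, rfl⟩
    exact mul_nonneg (mul_nonneg (inv_nonneg.mpr (lNorm_nonneg _ _))
      (inv_nonneg.mpr (lNorm_nonneg _ _))) (lNorm_nonneg _ _)
  obtain ⟨i₀, hi₀⟩ := exists_lNorm_row_ne_zero hq0 hN.ne'
  have : Nonempty m := ⟨i₀⟩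
  set γ := q.toReal * s⁻¹.toReal
  have hexp : γ + γ + 1 = q.toReal * p⁻¹.toReal := by
    linear_combination -q.toReal * toReal_inv_eq_add_add hp0 hpsq - toReal_mul_toReal_inv hq0 hq
  have hR : ∀ i, 0 ≤ lNorm p (v i) := fun i => lNorm_nonneg _ _
  set a : m → ℂ := fun i => ((lNorm p (v i) ^ γ : ℝ) : ℂ)
  have ha : a ≠ 0 := fun h => (Real.rpow_pos_of_pos ((hR i₀).lt_of_ne' hi₀) γ).ne' <| by
    simpa [a] using congrFun h i₀
  refine (IsGreatest.csSup_eq (s := S) ⟨⟨a, a, ha, ha, ?_⟩, hle⟩).symm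
  have hu := lNorm_uncurry_rowwise_mul_eq_rpow hq0 hq hp0 hp (v := v) hexp (c := fun i => a i * a i)
    fun i => by
      simp only [a, ← Complex.ofReal_mul]
      rw [Complex.norm_of_nonneg (mul_nonneg (Real.rpow_nonneg (hR i) _)
        (Real.rpow_nonneg (hR i) _))]
  simp only [mul_right_comm (a _) (v _ _) (a _)]
  rw [hu, lNorm_rowNorms_rpow hs hq0 hq, ← Real.rpow_neg hN.le,
    rpow_mul_rpow_mul_rpow hN.le (by linarith), ← hexp, show -γ + -γ + (γ + γ + 1) = 1 by ring,
    Real.rpow_one]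

end lqlpNorm

theorem ite_ne_zero_div_eq_inv_mul {G₀ : Type*} [CommGroupWithZero G₀] [DecidableEq G₀]
    (x c : G₀) : (if x ≠ 0 then x / c else 0) = c⁻¹ * x := by
  split_ifs with hx
  · exact div_eq_inv_mul x c
  · rw [not_not.mp hx, mul_zero]

theorem recipGap_comm (q p : ℝ≥0∞) : recipGap q p = recipGap p q := max_comm _ _

theorem inv_eq_inv_two_mul_inv_recipGap_add {q p : ℝ≥0∞} (hqp : q ≤ p) :
    q⁻¹ = (2 * (recipGap q p)⁻¹)⁻¹ + (2 * (recipGap q p)⁻¹)⁻¹ + p⁻¹ := by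
  have hpq : p⁻¹ ≤ q⁻¹ := ENNReal.inv_le_inv.mpr hqp
  rw [ENNReal.mul_inv (Or.inl two_ne_zero) (Or.inl ENNReal.ofNat_ne_top), inv_inv, ← add_mul,
    ENNReal.inv_two_add_inv_two, one_mul, recipGap, one_div, one_div,
    tsub_eq_zero_of_le hpq, max_eq_left zero_le, tsub_add_cancel_of_le hpq]

/-- Variational formulas for the 2-indexed `ℓ_q[ℓ_p]` quasi-norms. -/
theorem lqlp_variational (D₁ D₂ : ℕ) (q p : ℝ≥0∞) (hq0 : 0 < q) (hq : q ≠ ∞)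
    (hp0 : 0 < p) (hp : p ≠ ∞) (v : Matrix (Fin D₁) (Fin D₂) ℂ) :
    (q ≤ p →
      (∑ i, (∑ j, ‖v i j‖ ^ p.toReal) ^ (q.toReal / p.toReal)) ^ (1 / q.toReal) =
        sInf { c | ∃ a b : Fin D₁ → ℝ, (∀ i, 0 ≤ a i) ∧ (∀ i, 0 ≤ b i) ∧
          (∀ i, (∃ j, v i j ≠ 0) → 0 < a i ∧ 0 < b i) ∧
          c = lNorm (2 * (recipGap q p)⁻¹) (fun i => (a i : ℂ)) *
              lNorm (2 * (recipGap q p)⁻¹) (fun i => (b i : ℂ)) *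
              lNorm p (fun ij : Fin D₁ × Fin D₂ =>
                if v ij.1 ij.2 ≠ 0 then v ij.1 ij.2 / ((a ij.1 : ℂ) * (b ij.1 : ℂ)) else 0) }) ∧
    (p ≤ q →
      (∑ i, (∑ j, ‖v i j‖ ^ p.toReal) ^ (q.toReal / p.toReal)) ^ (1 / q.toReal) =
        sSup { c | ∃ a b : Fin D₁ → ℂ, a ≠ 0 ∧ b ≠ 0 ∧
          c = (lNorm (2 * (recipGap q p)⁻¹) a)⁻¹ * (lNorm (2 * (recipGap q p)⁻¹) b)⁻¹ *
              lNorm p (fun ij : Fin D₁ × Fin D₂ => a ij.1 * v ij.1 ij.2 * b ij.1) }) := by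
  rw [← lqlpNorm_eq_sum hq hp0.ne' hp]
  refine ⟨fun hqp => ?_, fun hpq => ?_⟩
  · simp_rw [ite_ne_zero_div_eq_inv_mul]
    exact lqlpNorm_eq_sInf hq0.ne' hq hp0.ne' hp (inv_eq_inv_two_mul_inv_recipGap_add hqp) v
  · rw [recipGap_comm]
    exact lqlpNorm_eq_sSup hq0.ne' hq hp0.ne' hp (inv_eq_inv_two_mul_inv_recipGap_add hpq) v
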